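/- arXiv:math/0312084 — 4 statements merged into one kernel-verified Lean document; each statement's English description precedes it below -/
import Mathlib

section
/- With γ(z) = (q²e^{-2iπz}; q²)_∞ / (e^{-2iπz/τ}; q^{-2/τ²})_∞, the function γ satisfies the difference equation γ(z+τ)/γ(z) = 1 - e^{-2iπz} at every point where both sides are defined. -/
open Complex

/-- Numerator `(q² e^{-2iπz}; q²)_∞ = ∏_{n≥1} (1 - e^{-2iπ(z - nτ)})` with `q = e^{iπτ}`. -/
noncomputable def gammaNum (τ z : ℂ) : ℂ :=
  ∏' n : ℕ, (1 - Complex.exp (-(2 * Real.pi * Complex.I) * (z - ((n : ℂ) + 1) * τ)))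

/-- Denominator `(e^{-2iπz/τ}; q^{-2/τ²})_∞ = ∏_{n≥0} (1 - e^{-2iπ(z+n)/τ})`. -/
noncomputable def gammaDen (τ z : ℂ) : ℂ :=
  ∏' n : ℕ, (1 - Complex.exp (-(2 * Real.pi * Complex.I) * (z + (n : ℂ)) / τ))

/-- The γ-function as a ratio of two infinite products. -/
noncomputable def gammaFn (τ z : ℂ) : ℂ := gammaNum τ z / gammaDen τ z

/-! Shifting `z` by `τ` multiplies the numerator by its missing `n = 0` factor `1 - e^{-2iπz}`,
while the denominator is `τ`-periodic because `e^{-2iπ(z+τ+n)/τ} = e^{-2iπ(z+n)/τ} e^{-2iπ}`. -/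

lemma summable_cexp_neg_two_pi_I_mul_sub_nat_mul {τ : ℂ} (hτ : 0 < τ.im) (w : ℂ) :
    Summable fun n : ℕ => cexp (-(2 * Real.pi * I) * (w - n * τ)) := by
  have hq : ‖cexp (2 * Real.pi * I * τ)‖ < 1 := by
    rw [norm_exp, Real.exp_lt_one_iff]
    simpa [mul_re, mul_im] using mul_pos Real.two_pi_pos hτ
  refine ((summable_geometric_of_norm_lt_one hq).mul_left
    (cexp (-(2 * Real.pi * I) * w))).congr fun n => ?_
  rw [← exp_nat_mul, ← exp_add]
  ring_nf

lemma gammaNum_add_self {τ : ℂ} (hτ : 0 < τ.im) (z : ℂ) :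
    gammaNum τ (z + τ) = (1 - cexp (-(2 * Real.pi * I) * z)) * gammaNum τ z := by
  set f : ℕ → ℂ := fun n => 1 - cexp (-(2 * Real.pi * I) * (z - n * τ))
  have hf : Multipliable fun n => f (n + 1) := by
    simpa [f, sub_eq_add_neg] using Complex.multipliable_one_add_of_summable
      ((summable_nat_add_iff 1).2 (summable_cexp_neg_two_pi_I_mul_sub_nat_mul hτ z)).neg
  have hshift : gammaNum τ (z + τ) = ∏' n, f n :=
    tprod_congr fun n => by simp only [f]; ring_nf
  rw [hshift, tprod_eq_zero_mul' hf]
  simp [f, gammaNum]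

lemma gammaDen_periodic (τ : ℂ) : Function.Periodic (gammaDen τ) τ := by
  intro z
  rcases eq_or_ne τ 0 with rfl | hτ
  · rw [add_zero]
  refine tprod_congr fun n => ?_
  have hsplit : -(2 * Real.pi * I) * (z + τ + n) / τ
      = -(2 * Real.pi * I) * (z + n) / τ - 2 * Real.pi * I := by
    field_simp
    ring
  rw [hsplit, exp_periodic.sub_eq]

lemma gammaFn_add_self {τ : ℂ} (hτ : 0 < τ.im) (z : ℂ) :
    gammaFn τ (z + τ) = (1 - cexp (-(2 * Real.pi * I) * z)) * gammaFn τ z := by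
  rw [gammaFn, gammaFn, gammaNum_add_self hτ, gammaDen_periodic, mul_div_assoc]

theorem stmt2_general (τ : ℂ) (hτ : 0 < τ.im) (z : ℂ)
    (h : gammaFn τ z ≠ 0) :
    gammaFn τ (z + τ) / gammaFn τ z = 1 - Complex.exp (-(2 * Real.pi * Complex.I) * z) := by
  rw [gammaFn_add_self hτ, mul_div_cancel_right₀ _ h]

theorem stmt2 (τ : ℂ) (hτ : 0 < τ.im) (z : ℂ)
    (h : gammaFn τ z ≠ 0) (h' : gammaDen τ (z + τ) ≠ 0) :
    gammaFn τ (z + τ) / gammaFn τ z = 1 - Complex.exp (-(2 * Real.pi * Complex.I) * z) :=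
  stmt2_general τ hτ z h
end

section
/- Let u, v satisfy uv = q²vu with q central. Then for every n ≥ 1: (u − uv + v)·∏_{k=1}^{n}(1 − q^{2k}v) = ∏_{k=1}^{n}(1 − q^{2k}v)·(u − q^{2n}uv + v), where the products are ordered left to right. -/
/-- Ordered product `(1 - q²v)(1 - q⁴v)···(1 - q^{2n}v)`. -/
def qProd {R : Type*} [Ring R] (q v : R) (n : ℕ) : R :=
  ((List.range n).map (fun k => 1 - q ^ (2 * (k + 1)) * v)).prod

private lemma step_aux {R : Type*} [Ring R] (p c u v : R)
    (hp : ∀ r : R, p * r = r * p) (hc : ∀ r : R, c * r = r * c)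
    (huv : u * v = p * (v * u)) :
    (u - c * (u * v) + v) * (1 - p * c * v)
      = (1 - p * c * v) * (u - p * c * (u * v) + v) := by
  have huv' : ∀ x : R, u * (v * x) = p * (v * (u * x)) := by
    intro x; rw [← mul_assoc, huv, mul_assoc, mul_assoc]
  have hup : ∀ x : R, u * (p * x) = p * (u * x) := by
    intro x; rw [← mul_assoc, ← hp u, mul_assoc]
  have hvp : ∀ x : R, v * (p * x) = p * (v * x) := by
    intro x; rw [← mul_assoc, ← hp v, mul_assoc]
  have huc : ∀ x : R, u * (c * x) = c * (u * x) := by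
    intro x; rw [← mul_assoc, ← hc u, mul_assoc]
  have hvc : ∀ x : R, v * (c * x) = c * (v * x) := by
    intro x; rw [← mul_assoc, ← hc v, mul_assoc]
  have hcp : ∀ x : R, c * (p * x) = p * (c * x) := by
    intro x; rw [← mul_assoc, ← hp c, mul_assoc]
  have hup' : u * p = p * u := (hp u).symm
  have huc' : u * c = c * u := (hc u).symm
  have hvp' : v * p = p * v := (hp v).symm
  have hvc' : v * c = c * v := (hc v).symm
  have hcp' : c * p = p * c := (hp c).symm
  simp only [mul_sub, sub_mul, mul_add, add_mul, mul_one, one_mul, mul_assoc]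
  simp only [huv, huv', hup, hvp, huc, hvc, hcp, hup', huc', hvp', hvc', hcp']
  abel

private lemma qProd_succ {R : Type*} [Ring R] (q v : R) (n : ℕ) :
    qProd q v (n + 1) = qProd q v n * (1 - q ^ (2 * (n + 1)) * v) := by
  simp [qProd, List.range_succ]

theorem stmt12 {R : Type*} [Ring R] (q u v : R)
    (hq : ∀ r : R, q * r = r * q)
    (huv : u * v = q ^ 2 * (v * u)) (n : ℕ) (hn : 1 ≤ n) :
    (u - u * v + v) * qProd q v n = qProd q v n * (u - q ^ (2 * n) * (u * v) + v) := by
  clear hn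
  have hpow : ∀ (m : ℕ) (r : R), q ^ m * r = r * q ^ m := fun m r =>
    ((Commute.pow_left (hq r) m))
  induction n with
  | zero => simp [qProd]
  | succ n ih =>
      rw [qProd_succ, ← mul_assoc, ih, mul_assoc, mul_assoc]
      congr 1
      have hpc : q ^ 2 * q ^ (2 * n) = q ^ (2 * (n + 1)) := by
        rw [← pow_add]; ring_nf
      calc (u - q ^ (2 * n) * (u * v) + v) * (1 - q ^ (2 * (n + 1)) * v)
          = (u - q ^ (2 * n) * (u * v) + v) * (1 - q ^ 2 * q ^ (2 * n) * v) := by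
            rw [hpc]
        _ = (1 - q ^ 2 * q ^ (2 * n) * v) * (u - q ^ 2 * q ^ (2 * n) * (u * v) + v) :=
            step_aux (q ^ 2) (q ^ (2 * n)) u v (hpow 2) (hpow (2 * n)) huv
        _ = (1 - q ^ (2 * (n + 1)) * v) * (u - q ^ (2 * (n + 1)) * (u * v) + v) := by
            rw [hpc]
end

section
/- Schützenberger's identity (formal power series version): if u, v are noncommuting formal variables with uv = q²vu, then in the algebra of formal power series over ℂ[[q]] (or with |q|<1 and convergent products in a Banach algebra where the products converge) one has (q²(u+v); q²)_∞ = (q²u; q²)_∞ · (q²v; q²)_∞, where (q²w; q²)_∞ = ∏_{k≥1}(1 − q^{2k}w). -/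
open Filter Topology

/-- Partial ordered product `(1 - q²w)(1 - q⁴w)···(1 - q^{2n}w)`. -/
def qPochPartial {R : Type*} [Ring R] (q w : R) (n : ℕ) : R :=
  ((List.range n).map (fun k => 1 - q ^ (2 * (k + 1)) * w)).prod

namespace Stmt14Aux

variable {R : Type*} [NormedRing R]

/-- Tail partial product `∏_{j=0}^{n-1} (1 - q^{2(m+j+1)} w)`. -/
def tp (q w : R) (m n : ℕ) : R :=
  ((List.range n).map (fun k => 1 - q ^ (2 * (m + k + 1)) * w)).prod

lemma factor_congr (q w : R) {a b : ℕ} (h : a = b) :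
    1 - q ^ a * w = 1 - q ^ b * w := by rw [h]

lemma tp_zero (q w : R) (m : ℕ) : tp q w m 0 = 1 := by simp [tp]

lemma tp_succ (q w : R) (m n : ℕ) :
    tp q w m (n + 1) = tp q w m n * (1 - q ^ (2 * (m + n + 1)) * w) := by
  simp [tp, List.range_succ]

lemma tp_succ' (q w : R) (m n : ℕ) :
    tp q w m (n + 1) = (1 - q ^ (2 * (m + 1)) * w) * tp q w (m + 1) n := by
  induction n with
  | zero => simp [tp_succ, tp_zero]
  | succ n ih =>
      rw [tp_succ q w m (n + 1), ih, mul_assoc,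
        show 2 * (m + (n + 1) + 1) = 2 * (m + 1 + n + 1) by omega,
        ← tp_succ q w (m + 1) n]

lemma tp_eq_qPoch (q w : R) (n : ℕ) : tp q w 0 n = qPochPartial q w n := by
  unfold tp qPochPartial
  congr 1
  apply List.map_congr_left
  intro k _
  exact factor_congr q w (by omega)

/-- Single-factor commutation: `(1 - q^a u) v = v (1 - q^{a+2} u)`. -/
lemma factor_comm (q u v : R) (hq : ∀ r : R, q * r = r * q)
    (huv : u * v = q ^ 2 * (v * u)) (a : ℕ) :
    (1 - q ^ a * u) * v = v * (1 - q ^ (a + 2) * u) := by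
  have hqc : ∀ (j : ℕ) (x : R), q ^ j * x = x * q ^ j := by
    intro j x
    have hc : Commute q x := hq x
    exact hc.pow_left j
  have h1 : q ^ a * u * v = v * (q ^ (a + 2) * u) := by
    calc q ^ a * u * v = q ^ a * (u * v) := by rw [mul_assoc]
    _ = q ^ a * (q ^ 2 * (v * u)) := by rw [huv]
    _ = q ^ (a + 2) * (v * u) := by rw [← mul_assoc, ← pow_add]
    _ = (q ^ (a + 2) * v) * u := by rw [mul_assoc]
    _ = (v * q ^ (a + 2)) * u := by rw [hqc]
    _ = v * (q ^ (a + 2) * u) := by rw [mul_assoc]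
  rw [sub_mul, one_mul, h1, mul_sub, mul_one]

/-- Finite commutation: `tp q u m n * v = v * tp q u (m+1) n`. -/
lemma tp_mul_right (q u v : R) (hq : ∀ r : R, q * r = r * q)
    (huv : u * v = q ^ 2 * (v * u)) (m n : ℕ) :
    tp q u m n * v = v * tp q u (m + 1) n := by
  induction n with
  | zero => simp [tp_zero]
  | succ n ih =>
      rw [tp_succ, mul_assoc, factor_comm q u v hq huv, ← mul_assoc, ih,
        mul_assoc, show 2 * (m + n + 1) + 2 = 2 * (m + 1 + n + 1) by omega,
        ← tp_succ q u (m + 1) n]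

end Stmt14Aux

open Stmt14Aux

/-- Schützenberger's identity: in a complete normed algebra where the infinite products
`(q²(u+v); q²)_∞`, `(q²u; q²)_∞` and `(q²v; q²)_∞` converge (as limits of the ordered
partial products), if `uv = q²vu` with `q` central then
`(q²(u+v); q²)_∞ = (q²u; q²)_∞ · (q²v; q²)_∞`. -/
theorem stmt14 {R : Type*} [NormedRing R] [CompleteSpace R] (q u v : R)
    (hq : ∀ r : R, q * r = r * q) (hq1 : ‖q‖ < 1)
    (huv : u * v = q ^ 2 * (v * u))
    (Puv Pu Pv : R)
    (hPuv : Tendsto (fun n => qPochPartial q (u + v) n) atTop (𝓝 Puv))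
    (hPu : Tendsto (fun n => qPochPartial q u n) atTop (𝓝 Pu))
    (hPv : Tendsto (fun n => qPochPartial q v n) atTop (𝓝 Pv)) :
    Puv = Pu * Pv := by
  rcases subsingleton_or_nontrivial R with hS | hN
  · exact Subsingleton.elim _ _
  have hone : (1 : ℝ) ≤ ‖(1 : R)‖ := one_le_norm_one R
  have hone0 : (0 : ℝ) < ‖(1 : R)‖ := lt_of_lt_of_le one_pos hone
  have hq0 : (0 : ℝ) ≤ ‖q‖ := norm_nonneg q
  set r : ℝ := ‖q‖ ^ 2 with hr_def
  have hr0 : (0 : ℝ) ≤ r := by positivity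
  have hr1 : r < 1 := pow_lt_one₀ hq0 hq1 (by norm_num)
  have hinv0 : (0 : ℝ) ≤ (1 - r)⁻¹ := by
    have : (0:ℝ) < 1 - r := by linarith
    positivity
  have hqle1 : ‖q‖ ≤ 1 := le_of_lt hq1
  -- norm of a single power factor
  have hpow : ∀ (e : ℕ) (w : R), 0 < e → ‖q ^ e * w‖ ≤ ‖q‖ ^ e * ‖w‖ := by
    intro e w he
    exact (norm_mul_le _ _).trans
      (mul_le_mul_of_nonneg_right (norm_pow_le' q he) (norm_nonneg w))
  -- geometric sum bound
  have hsum : ∀ (m n : ℕ),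
      (∑ j ∈ Finset.range n, ‖q‖ ^ (2 * (m + j + 1))) ≤ ‖q‖ ^ (2 * (m + 1)) * (1 - r)⁻¹ := by
    intro m n
    have h1 : ∀ j : ℕ, ‖q‖ ^ (2 * (m + j + 1)) = ‖q‖ ^ (2 * (m + 1)) * r ^ j := by
      intro j
      rw [hr_def, ← pow_mul, ← pow_add]
      congr 1
      omega
    calc (∑ j ∈ Finset.range n, ‖q‖ ^ (2 * (m + j + 1)))
        = ‖q‖ ^ (2 * (m + 1)) * ∑ j ∈ Finset.range n, r ^ j := by
          rw [Finset.mul_sum]; exact Finset.sum_congr rfl (fun j _ => h1 j)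
      _ ≤ ‖q‖ ^ (2 * (m + 1)) * (1 - r)⁻¹ := by
          apply mul_le_mul_of_nonneg_left _ (by positivity)
          have hs := Summable.sum_le_tsum (Finset.range n)
            (fun i _ => pow_nonneg hr0 i) (summable_geometric_of_lt_one hr0 hr1)
          rwa [tsum_geometric_of_lt_one hr0 hr1] at hs
  have hqm1 : ∀ m : ℕ, ‖q‖ ^ (2 * (m + 1)) ≤ 1 := fun m => pow_le_one₀ hq0 hqle1
  -- main norm bound by induction
  have hbound : ∀ (w : R) (m n : ℕ),
      ‖tp q w m n - 1‖ ≤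
        ‖(1 : R)‖ * (Real.exp ((∑ j ∈ Finset.range n, ‖q‖ ^ (2 * (m + j + 1))) * ‖w‖) - 1) := by
    intro w m n
    induction n with
    | zero => simp [tp_zero]
    | succ n ih =>
        have key : tp q w m (n + 1) - 1
            = (tp q w m n - 1) - tp q w m n * (q ^ (2 * (m + n + 1)) * w) := by
          rw [tp_succ, mul_sub, mul_one]
          abel
        set s : ℝ := (∑ j ∈ Finset.range n, ‖q‖ ^ (2 * (m + j + 1))) * ‖w‖ with hs_def
        have hs0 : 0 ≤ s := by
          apply mul_nonneg _ (norm_nonneg w)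
          exact Finset.sum_nonneg (fun j _ => pow_nonneg hq0 _)
        set α : ℝ := ‖q‖ ^ (2 * (m + n + 1)) * ‖w‖ with hα_def
        have hα0 : 0 ≤ α := mul_nonneg (pow_nonneg hq0 _) (norm_nonneg w)
        have hsum_succ : (∑ j ∈ Finset.range (n + 1), ‖q‖ ^ (2 * (m + j + 1))) * ‖w‖ = s + α := by
          rw [Finset.sum_range_succ, add_mul]
        rw [hsum_succ, key]
        have h2 : ‖(tp q w m n - 1) - tp q w m n * (q ^ (2 * (m + n + 1)) * w)‖
            ≤ ‖tp q w m n - 1‖ + (‖tp q w m n - 1‖ + ‖(1 : R)‖) * α := by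
          refine (norm_sub_le _ _).trans ?_
          gcongr
          refine (norm_mul_le _ _).trans ?_
          have h3 : ‖tp q w m n‖ ≤ ‖tp q w m n - 1‖ + ‖(1 : R)‖ := by
            calc ‖tp q w m n‖ = ‖(tp q w m n - 1) + 1‖ := by congr 1; abel
            _ ≤ ‖tp q w m n - 1‖ + ‖(1 : R)‖ := norm_add_le _ _
          exact mul_le_mul h3 (hpow _ w (by omega)) (norm_nonneg _) (by positivity)
        refine h2.trans ?_
        set X := ‖tp q w m n - 1‖ with hX_def
        set h := ‖(1 : R)‖ with hh_def
        have hX0 : 0 ≤ X := norm_nonneg _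
        have hXle : X ≤ h * (Real.exp s - 1) := ih
        have hstep1 : X + (X + h) * α ≤ h * (Real.exp s - 1) + (h * Real.exp s) * α := by
          nlinarith
        have hstep2 : h * (Real.exp s - 1) + (h * Real.exp s) * α
            = h * (Real.exp s * (1 + α)) - h := by ring
        have hstep3 : h * (Real.exp s * (1 + α)) - h ≤ h * (Real.exp s * Real.exp α) - h := by
          have he1 : 1 + α ≤ Real.exp α := by
            have := Real.add_one_le_exp α
            linarith
          nlinarith [Real.exp_pos s]
        have hstep4 : h * (Real.exp s * Real.exp α) - h = h * (Real.exp (s + α) - 1) := by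
          rw [Real.exp_add]; ring
        linarith
  -- uniform bounds
  have hbound' : ∀ (w : R) (m n : ℕ),
      ‖tp q w m n - 1‖ ≤
        ‖(1 : R)‖ * (Real.exp (‖q‖ ^ (2 * (m + 1)) * (1 - r)⁻¹ * ‖w‖) - 1) := by
    intro w m n
    refine (hbound w m n).trans ?_
    refine mul_le_mul_of_nonneg_left ?_ (le_trans zero_le_one hone)
    refine sub_le_sub_right (Real.exp_le_exp.mpr ?_) 1
    exact mul_le_mul_of_nonneg_right (hsum m n) (norm_nonneg w)
  have hCnorm : ∀ (w : R) (m n : ℕ),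
      ‖tp q w m n‖ ≤ ‖(1 : R)‖ * Real.exp ((1 - r)⁻¹ * ‖w‖) := by
    intro w m n
    have h1 : ‖tp q w m n‖ ≤ ‖tp q w m n - 1‖ + ‖(1 : R)‖ := by
      calc ‖tp q w m n‖ = ‖(tp q w m n - 1) + 1‖ := by congr 1; abel
      _ ≤ ‖tp q w m n - 1‖ + ‖(1 : R)‖ := norm_add_le _ _
    refine h1.trans ?_
    have h2 := hbound' w m n
    have h3 : ‖q‖ ^ (2 * (m + 1)) * (1 - r)⁻¹ * ‖w‖ ≤ (1 - r)⁻¹ * ‖w‖ := by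
      have hw0 : (0:ℝ) ≤ ‖w‖ := norm_nonneg w
      nlinarith [mul_nonneg hinv0 hw0,
        mul_le_mul_of_nonneg_right (hqm1 m) (mul_nonneg hinv0 hw0)]
    have h4 : Real.exp (‖q‖ ^ (2 * (m + 1)) * (1 - r)⁻¹ * ‖w‖) ≤ Real.exp ((1 - r)⁻¹ * ‖w‖) :=
      Real.exp_le_exp.mpr h3
    nlinarith
  -- Cauchy sequences and limits
  have hcauchy : ∀ (w : R) (m : ℕ), CauchySeq (fun n => tp q w m n) := by
    intro w m
    apply cauchySeq_of_le_geometric r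
      (‖(1 : R)‖ * Real.exp ((1 - r)⁻¹ * ‖w‖) * (‖q‖ ^ (2 * (m + 1)) * ‖w‖)) hr1
    intro n
    rw [dist_eq_norm]
    have key : tp q w m n - tp q w m (n + 1) = tp q w m n * (q ^ (2 * (m + n + 1)) * w) := by
      rw [tp_succ, mul_sub, mul_one]
      abel
    rw [key]
    refine (norm_mul_le _ _).trans ?_
    have h1 := hCnorm w m n
    have h2 : ‖q ^ (2 * (m + n + 1)) * w‖ ≤ ‖q‖ ^ (2 * (m + 1)) * ‖w‖ * r ^ n := by
      refine (hpow _ w (by omega)).trans ?_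
      have he : ‖q‖ ^ (2 * (m + n + 1)) = ‖q‖ ^ (2 * (m + 1)) * r ^ n := by
        rw [hr_def, ← pow_mul, ← pow_add]; congr 1; omega
      rw [he]
      ring_nf
      exact le_refl _
    calc ‖tp q w m n‖ * ‖q ^ (2 * (m + n + 1)) * w‖
        ≤ (‖(1 : R)‖ * Real.exp ((1 - r)⁻¹ * ‖w‖)) * (‖q‖ ^ (2 * (m + 1)) * ‖w‖ * r ^ n) := by
          apply mul_le_mul h1 h2 (norm_nonneg _) (by positivity)
      _ = ‖(1 : R)‖ * Real.exp ((1 - r)⁻¹ * ‖w‖) * (‖q‖ ^ (2 * (m + 1)) * ‖w‖) * r ^ n := by ring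
  have hex : ∀ (w : R) (m : ℕ), ∃ x : R, Tendsto (fun n => tp q w m n) atTop (𝓝 x) :=
    fun w m => cauchySeq_tendsto_of_complete (hcauchy w m)
  choose L hL using hex
  -- identify L w 0 with the given limits
  have hL0 : ∀ (w P : R), Tendsto (fun n => qPochPartial q w n) atTop (𝓝 P) → L w 0 = P := by
    intro w P hP
    refine tendsto_nhds_unique ?_ hP
    have := hL w 0
    simpa only [tp_eq_qPoch] using this
  -- recursion R1
  have hR1 : ∀ (w : R) (m : ℕ), L w m = (1 - q ^ (2 * (m + 1)) * w) * L w (m + 1) := by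
    intro w m
    have h1 : Tendsto (fun n => tp q w m (n + 1)) atTop (𝓝 (L w m)) :=
      (hL w m).comp (tendsto_add_atTop_nat 1)
    have h2 : Tendsto (fun n => (1 - q ^ (2 * (m + 1)) * w) * tp q w (m + 1) n) atTop
        (𝓝 ((1 - q ^ (2 * (m + 1)) * w) * L w (m + 1))) := (hL w (m + 1)).const_mul _
    refine tendsto_nhds_unique h1 ?_
    simpa only [← tp_succ'] using h2
  -- commutation R3
  have hR3 : ∀ m : ℕ, L u m * v = v * L u (m + 1) := by
    intro m
    have h1 : Tendsto (fun n => tp q u m n * v) atTop (𝓝 (L u m * v)) := (hL u m).mul_const v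
    have h2 : Tendsto (fun n => v * tp q u (m + 1) n) atTop (𝓝 (v * L u (m + 1))) :=
      (hL u (m + 1)).const_mul v
    refine tendsto_nhds_unique h1 ?_
    simpa only [tp_mul_right q u v hq huv] using h2
  -- tails tend to 1
  have hLnorm : ∀ (w : R) (m : ℕ),
      ‖L w m - 1‖ ≤ ‖(1 : R)‖ * (Real.exp (‖q‖ ^ (2 * (m + 1)) * (1 - r)⁻¹ * ‖w‖) - 1) := by
    intro w m
    have h1 : Tendsto (fun n => ‖tp q w m n - 1‖) atTop (𝓝 ‖L w m - 1‖) :=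
      ((hL w m).sub_const 1).norm
    exact le_of_tendsto h1 (Eventually.of_forall (fun n => hbound' w m n))
  have hKto0 : ∀ w : R, Tendsto
      (fun m => ‖(1 : R)‖ * (Real.exp (‖q‖ ^ (2 * (m + 1)) * (1 - r)⁻¹ * ‖w‖) - 1)) atTop
      (𝓝 0) := by
    intro w
    have h1 : Tendsto (fun m : ℕ => ‖q‖ ^ (2 * (m + 1)) * (1 - r)⁻¹ * ‖w‖) atTop (𝓝 0) := by
      have h2 : Tendsto (fun m : ℕ => r ^ (m + 1)) atTop (𝓝 0) :=
        (tendsto_pow_atTop_nhds_zero_of_lt_one hr0 hr1).comp (tendsto_add_atTop_nat 1)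
      have h3 : (fun m : ℕ => ‖q‖ ^ (2 * (m + 1)) * (1 - r)⁻¹ * ‖w‖)
          = fun m : ℕ => r ^ (m + 1) * ((1 - r)⁻¹ * ‖w‖) := by
        funext m
        rw [hr_def, ← pow_mul]
        ring_nf
      rw [h3]
      simpa using h2.mul_const ((1 - r)⁻¹ * ‖w‖)
    have h4 := ((Real.continuous_exp.tendsto 0).comp h1).sub_const 1
    have h5 := h4.const_mul ‖(1 : R)‖
    simpa using h5
  have hLone : ∀ w : R, Tendsto (fun m => L w m) atTop (𝓝 1) := by
    intro w
    rw [tendsto_iff_norm_sub_tendsto_zero]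
    exact squeeze_zero (fun m => norm_nonneg _) (fun m => hLnorm w m) (hKto0 w)
  -- centrality of powers of q
  have hqc : ∀ (j : ℕ) (x : R), q ^ j * x = x * q ^ j := by
    intro j x
    have hc : Commute q x := hq x
    exact hc.pow_left j
  -- G recursion
  have hG : ∀ m : ℕ, L u m * L v m
      = (1 - q ^ (2 * (m + 1)) * (u + v)) * (L u (m + 1) * L v (m + 1)) := by
    intro m
    have e1 : L u m * (1 - q ^ (2 * (m + 1)) * v)
        = (1 - q ^ (2 * (m + 1)) * (u + v)) * L u (m + 1) := by
      have c1 : L u m * (q ^ (2 * (m + 1)) * v) = q ^ (2 * (m + 1)) * (v * L u (m + 1)) := by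
        calc L u m * (q ^ (2 * (m + 1)) * v) = (L u m * q ^ (2 * (m + 1))) * v := by
              rw [mul_assoc]
          _ = (q ^ (2 * (m + 1)) * L u m) * v := by rw [← hqc]
          _ = q ^ (2 * (m + 1)) * (L u m * v) := by rw [mul_assoc]
          _ = q ^ (2 * (m + 1)) * (v * L u (m + 1)) := by rw [hR3 m]
      calc L u m * (1 - q ^ (2 * (m + 1)) * v)
          = L u m - L u m * (q ^ (2 * (m + 1)) * v) := by rw [mul_sub, mul_one]
        _ = (1 - q ^ (2 * (m + 1)) * u) * L u (m + 1)
              - q ^ (2 * (m + 1)) * (v * L u (m + 1)) := by rw [← hR1 u m, c1]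
        _ = (1 - q ^ (2 * (m + 1)) * (u + v)) * L u (m + 1) := by
              rw [mul_add]
              noncomm_ring
    calc L u m * L v m
        = L u m * ((1 - q ^ (2 * (m + 1)) * v) * L v (m + 1)) := by rw [← hR1 v m]
      _ = (L u m * (1 - q ^ (2 * (m + 1)) * v)) * L v (m + 1) := by rw [mul_assoc]
      _ = ((1 - q ^ (2 * (m + 1)) * (u + v)) * L u (m + 1)) * L v (m + 1) := by rw [e1]
      _ = (1 - q ^ (2 * (m + 1)) * (u + v)) * (L u (m + 1) * L v (m + 1)) := by
            rw [mul_assoc]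
  -- the difference
  set D : ℕ → R := fun m => L (u + v) m - L u m * L v m with hD_def
  have hDrec : ∀ m : ℕ, D m = (1 - q ^ (2 * (m + 1)) * (u + v)) * D (m + 1) := by
    intro m
    simp only [hD_def]
    rw [hR1 (u + v) m, hG m, mul_sub]
  have hD0 : ∀ m : ℕ, D 0 = tp q (u + v) 0 m * D m := by
    intro m
    induction m with
    | zero => rw [tp_zero, one_mul]
    | succ m ih =>
        rw [tp_succ, show 2 * (0 + m + 1) = 2 * (m + 1) by omega, mul_assoc,
          ← hDrec m, ih]
  have hDto0 : Tendsto D atTop (𝓝 0) := by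
    have h1 := (hLone (u + v)).sub ((hLone u).mul (hLone v))
    simpa using h1
  have hDnorm : ∀ m : ℕ, ‖D 0‖ ≤ ‖(1 : R)‖ * Real.exp ((1 - r)⁻¹ * ‖u + v‖) * ‖D m‖ := by
    intro m
    rw [hD0 m]
    refine (norm_mul_le _ _).trans ?_
    exact mul_le_mul_of_nonneg_right (hCnorm (u + v) 0 m) (norm_nonneg _)
  have hRHSto0 : Tendsto (fun m => ‖(1 : R)‖ * Real.exp ((1 - r)⁻¹ * ‖u + v‖) * ‖D m‖)
      atTop (𝓝 0) := by
    have h1 : Tendsto (fun m => ‖D m‖) atTop (𝓝 0) := by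
      simpa using hDto0.norm
    simpa using h1.const_mul (‖(1 : R)‖ * Real.exp ((1 - r)⁻¹ * ‖u + v‖))
  have hD0norm : ‖D 0‖ ≤ 0 :=
    ge_of_tendsto hRHSto0 (Eventually.of_forall hDnorm)
  have hD0zero : D 0 = 0 := norm_le_zero_iff.mp hD0norm
  have hfin : L (u + v) 0 = L u 0 * L v 0 := sub_eq_zero.mp hD0zero
  rw [← hL0 (u + v) Puv hPuv, ← hL0 u Pu hPu, ← hL0 v Pv hPv]
  exact hfin
end

section
/- Pfaff–Saalschütz identity: for nonnegative integers n, m, l, k, (n+l+k)!(n+m+k)!(n+m+l)! / ((n+m)!(n+l)!(n+k)! m! l! k!) = ∑_{j≥0} (n+m+l+k−j)! / ((n+j)!(m−j)!(l−j)!(k−j)! j!). -/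
open Nat Finset

noncomputable def Tq (n m l k j : ℕ) : ℚ :=
  (m.choose j : ℚ) * (l.choose j : ℚ) * (k.choose j : ℚ) * ((j ! : ℚ))^2 *
      ((n+m+l+k-j)! : ℚ) /
    (((n+j)! : ℚ) * (m ! : ℚ) * (l ! : ℚ) * (k ! : ℚ))

lemma fact_ne' (a : ℕ) : ((a ! : ℚ)) ≠ 0 := by
  have : (0:ℚ) < (a ! : ℚ) := by exact_mod_cast a.factorial_pos
  exact ne_of_gt this

lemma ptwise (n m l k j : ℕ) (hjm : j ≤ m) :
    ((n:ℚ)+k+1) * ((k:ℚ)+1) * Tq n m l (k+1) j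
      - ((n:ℚ)+l+k+1) * ((n:ℚ)+m+k+1) * Tq n m l k j
    = (-(((j:ℚ)+1) * ((n:ℚ)+j+1))) * Tq n m l (k+1) (j+1)
      - (-((j:ℚ) * ((n:ℚ)+j))) * Tq n m l (k+1) j := by
  rcases le_or_gt j l with hjl | hjl
  · rcases le_or_gt j k with hjk | hjk
    · -- main case: j ≤ m, j ≤ l, j ≤ k
      have e0 : ((j:ℚ)+1) ≠ 0 := by positivity
      have ejk : ((k:ℚ)+1-(j:ℚ)) ≠ 0 := by
        have : (j:ℚ) ≤ k := by exact_mod_cast hjk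
        intro h; nlinarith
      have h1 : ((m.choose (j+1)) : ℚ) = (m.choose j : ℚ) * ((m:ℚ) - j) / ((j:ℚ)+1) := by
        rw [eq_div_iff e0]
        have h := congrArg (Nat.cast (R := ℚ)) (Nat.choose_succ_right_eq m j)
        push_cast [Nat.cast_sub hjm] at h
        linarith [h]
      have h2 : ((l.choose (j+1)) : ℚ) = (l.choose j : ℚ) * ((l:ℚ) - j) / ((j:ℚ)+1) := by
        rw [eq_div_iff e0]
        have h := congrArg (Nat.cast (R := ℚ)) (Nat.choose_succ_right_eq l j)
        push_cast [Nat.cast_sub hjl] at h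
        linarith [h]
      have h3 : (((k+1).choose (j+1)) : ℚ) = (k.choose j : ℚ) * ((k:ℚ)+1) / ((j:ℚ)+1) := by
        rw [eq_div_iff e0]
        have h := congrArg (Nat.cast (R := ℚ)) (Nat.add_one_mul_choose_eq k j)
        push_cast at h
        linarith [h]
      have h4nat : (k+1).choose j * (k+1-j) = (k+1) * k.choose j := by
        rw [← Nat.choose_succ_right_eq (k+1) j, Nat.add_one_mul_choose_eq]
      have h4 : (((k+1).choose j) : ℚ) = (k.choose j : ℚ) * ((k:ℚ)+1) / ((k:ℚ)+1-(j:ℚ)) := by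
        rw [eq_div_iff ejk]
        have h := congrArg (Nat.cast (R := ℚ)) h4nat
        push_cast [Nat.cast_sub (show j ≤ k+1 by omega)] at h
        linarith [h]
      have h5 : ((n+m+l+(k+1)-j)! : ℚ) = ((n:ℚ)+m+l+k+1-(j:ℚ)) * ((n+m+l+k-j)! : ℚ) := by
        have harg : n+m+l+(k+1)-j = (n+m+l+k-j)+1 := by omega
        rw [harg, Nat.factorial_succ]
        push_cast [Nat.cast_sub (show j ≤ n+m+l+k by omega)]
        ring
      have h6 : ((n+m+l+(k+1)-(j+1))! : ℚ) = ((n+m+l+k-j)! : ℚ) := by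
        congr 2
        omega
      have h7 : ((n+(j+1))! : ℚ) = ((n:ℚ)+j+1) * ((n+j)! : ℚ) := by
        have harg : n+(j+1) = (n+j)+1 := by omega
        rw [harg, Nat.factorial_succ]
        push_cast
        ring
      have h8 : (((j+1))! : ℚ) = ((j:ℚ)+1) * ((j)! : ℚ) := by
        rw [Nat.factorial_succ]; push_cast; ring
      have h9 : (((k+1))! : ℚ) = ((k:ℚ)+1) * ((k)! : ℚ) := by
        rw [Nat.factorial_succ]; push_cast; ring
      simp only [Tq, h1, h2, h3, h4, h5, h6, h7, h8, h9]
      have f1 := fact_ne' (n+j)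
      have f2 := fact_ne' m
      have f3 := fact_ne' l
      have f4 := fact_ne' k
      field_simp
      ring
    · rcases le_or_gt j (k+1) with hjk1 | hjk1
      · -- j = k+1
        have hj : j = k+1 := by omega
        subst hj
        have c1 : k.choose (k+1) = 0 := Nat.choose_succ_self k
        have c2 : (k+1).choose (k+1+1) = 0 := Nat.choose_succ_self (k+1)
        simp only [Tq, c1, c2, Nat.cast_zero, zero_mul, mul_zero, zero_div, mul_zero,
          sub_zero, zero_mul]
        push_cast
        ring
      · -- k+1 < j : all relevant chooses vanish
        have c1 : k.choose j = 0 := Nat.choose_eq_zero_of_lt (by omega)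
        have c2 : (k+1).choose j = 0 := Nat.choose_eq_zero_of_lt (by omega)
        have c3 : (k+1).choose (j+1) = 0 := Nat.choose_eq_zero_of_lt (by omega)
        simp [Tq, c1, c2, c3]
  · -- l < j
    have c1 : l.choose j = 0 := Nat.choose_eq_zero_of_lt hjl
    have c2 : l.choose (j+1) = 0 := Nat.choose_eq_zero_of_lt (by omega)
    simp [Tq, c1, c2]

noncomputable def S (n m l k : ℕ) : ℚ := ∑ j ∈ Finset.range (m+1), Tq n m l k j


noncomputable def Lq (n m l k : ℕ) : ℚ :=
  (((n + l + k)! : ℚ) * ((n + m + k)! : ℚ) * ((n + m + l)! : ℚ)) /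
    (((n + m)! : ℚ) * ((n + l)! : ℚ) * ((n + k)! : ℚ) * (m ! : ℚ) * (l ! : ℚ) * (k ! : ℚ))

lemma step_L (n m l k : ℕ) :
    ((n:ℚ)+k+1) * ((k:ℚ)+1) * Lq n m l (k+1)
      = ((n:ℚ)+l+k+1) * ((n:ℚ)+m+k+1) * Lq n m l k := by
  have h1 : ((n+l+(k+1))! : ℚ) = ((n:ℚ)+l+k+1) * ((n+l+k)! : ℚ) := by
    have : n+l+(k+1) = (n+l+k)+1 := by omega
    rw [this, Nat.factorial_succ]; push_cast; ring
  have h2 : ((n+m+(k+1))! : ℚ) = ((n:ℚ)+m+k+1) * ((n+m+k)! : ℚ) := by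
    have : n+m+(k+1) = (n+m+k)+1 := by omega
    rw [this, Nat.factorial_succ]; push_cast; ring
  have h3 : ((n+(k+1))! : ℚ) = ((n:ℚ)+k+1) * ((n+k)! : ℚ) := by
    have : n+(k+1) = (n+k)+1 := by omega
    rw [this, Nat.factorial_succ]; push_cast; ring
  have h4 : (((k+1))! : ℚ) = ((k:ℚ)+1) * ((k)! : ℚ) := by
    rw [Nat.factorial_succ]; push_cast; ring
  simp only [Lq, h1, h2, h3, h4]
  have f1 := fact_ne' (n+m)
  have f2 := fact_ne' (n+l)
  have f3 := fact_ne' (n+k)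
  have f4 := fact_ne' m
  have f5 := fact_ne' l
  have f6 := fact_ne' k
  field_simp

lemma base_case (n m l : ℕ) : S n m l 0 = Lq n m l 0 := by
  have hs : S n m l 0 = Tq n m l 0 0 := by
    apply Finset.sum_eq_single_of_mem 0 (Finset.mem_range.mpr (by omega))
    intro j _ hj
    have : Nat.choose 0 j = 0 := Nat.choose_eq_zero_of_lt (by omega)
    simp [Tq, this]
  rw [hs]
  simp only [Tq, Lq]
  simp only [Nat.choose_zero_right, Nat.cast_one, Nat.add_zero, Nat.sub_zero,
    Nat.factorial_zero, one_mul, mul_one, one_pow]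
  have f1 := fact_ne' n
  have f2 := fact_ne' m
  have f3 := fact_ne' l
  have f4 := fact_ne' (n+m)
  have f5 := fact_ne' (n+l)
  field_simp

lemma step_sum (n m l k : ℕ) :
    ((n:ℚ)+k+1) * ((k:ℚ)+1) * S n m l (k+1)
      = ((n:ℚ)+l+k+1) * ((n:ℚ)+m+k+1) * S n m l k := by
  have key : ∑ j ∈ Finset.range (m+1),
      (((n:ℚ)+k+1) * ((k:ℚ)+1) * Tq n m l (k+1) j
        - ((n:ℚ)+l+k+1) * ((n:ℚ)+m+k+1) * Tq n m l k j)
      = ∑ j ∈ Finset.range (m+1),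
        ((fun i : ℕ => (-((i:ℚ) * ((n:ℚ)+(i:ℚ)))) * Tq n m l (k+1) i) (j+1)
          - (fun i : ℕ => (-((i:ℚ) * ((n:ℚ)+(i:ℚ)))) * Tq n m l (k+1) i) j) := by
    apply Finset.sum_congr rfl
    intro j hj
    have hjm : j ≤ m := by
      have := Finset.mem_range.mp hj; omega
    have := ptwise n m l k j hjm
    simp only []
    push_cast
    push_cast at this
    linarith [this]
  have tel := Finset.sum_range_sub
    (fun i : ℕ => (-((i:ℚ) * ((n:ℚ)+(i:ℚ)))) * Tq n m l (k+1) i) (m+1)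
  rw [tel] at key
  have hend : Tq n m l (k+1) (m+1) = 0 := by
    simp [Tq, Nat.choose_succ_self]
  rw [hend] at key
  simp only [Nat.cast_zero, zero_mul, mul_zero, neg_zero, sub_zero, zero_sub, neg_eq_zero] at key
  -- key : ∑ (A*T1 - B*T0) = 0 (roughly)
  have expand : ∑ j ∈ Finset.range (m+1),
      (((n:ℚ)+k+1) * ((k:ℚ)+1) * Tq n m l (k+1) j
        - ((n:ℚ)+l+k+1) * ((n:ℚ)+m+k+1) * Tq n m l k j)
      = ((n:ℚ)+k+1) * ((k:ℚ)+1) * S n m l (k+1)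
        - ((n:ℚ)+l+k+1) * ((n:ℚ)+m+k+1) * S n m l k := by
    rw [Finset.sum_sub_distrib, ← Finset.mul_sum, ← Finset.mul_sum]
    rfl
  rw [expand] at key
  linarith [key]

lemma main_eq (n m l k : ℕ) : S n m l k = Lq n m l k := by
  induction k with
  | zero => exact base_case n m l
  | succ k ih =>
    have hA : (((n:ℚ)+k+1) * ((k:ℚ)+1)) ≠ 0 := by positivity
    apply mul_left_cancel₀ hA
    rw [step_sum n m l k, ih, step_L n m l k]

theorem stmt17 (n m l k : ℕ) :
    (((n + l + k)! : ℚ) * (n + m + k)! * (n + m + l)!) /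
        ((n + m)! * (n + l)! * (n + k)! * m ! * l ! * k !) =
      ∑ j ∈ Finset.range (min m (min l k) + 1),
        ((n + m + l + k - j)! : ℚ) /
          ((n + j)! * (m - j)! * (l - j)! * (k - j)! * j !) := by
  have lhs_eq : (((n + l + k)! : ℚ) * (n + m + k)! * (n + m + l)!) /
        ((n + m)! * (n + l)! * (n + k)! * m ! * l ! * k !) = Lq n m l k := rfl
  rw [lhs_eq, ← main_eq n m l k]
  unfold S
  rw [← Finset.sum_subset (Finset.range_subset_range.mpr (by omega :
      min m (min l k) + 1 ≤ m + 1))]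
  · apply Finset.sum_congr rfl
    intro j hj
    have hj' := Finset.mem_range.mp hj
    have hjm : j ≤ m := by omega
    have hjl : j ≤ l := by omega
    have hjk : j ≤ k := by omega
    rw [Tq, Nat.cast_choose ℚ hjm, Nat.cast_choose ℚ hjl, Nat.cast_choose ℚ hjk]
    have f1 := fact_ne' j
    have f2 := fact_ne' (m-j)
    have f3 := fact_ne' (l-j)
    have f4 := fact_ne' (k-j)
    have f5 := fact_ne' (n+j)
    have f6 := fact_ne' m
    have f7 := fact_ne' l
    have f8 := fact_ne' k
    field_simp
  · intro j hj hj2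
    have hj' := Finset.mem_range.mp hj
    have : l < j ∨ k < j := by
      simp only [Finset.mem_range] at hj2
      omega
    rcases this with h | h
    · simp [Tq, Nat.choose_eq_zero_of_lt h]
    · simp [Tq, Nat.choose_eq_zero_of_lt h]
end
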